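/- arXiv:2503.07422 — 5 statements merged into one kernel-verified Lean document; each statement's English description precedes it below -/
import Mathlib

section
/- Let $F$ be a non-archimedean local field, $V$ an $r$-dimensional $F$-vector space, $\nu$ a non-archimedean norm on $V$, and $L$ an $O_F$-lattice in $V$. Then there exists an $O_F$-basis $\{u_1,\dots,u_r\}$ of $L$ that is orthogonal with respect to $\nu$, i.e., $\nu(a_1u_1+\cdots+a_ru_r) = \max_i \nu(a_iu_i)$ for all $a_1,\dots,a_r \in F$. -/
/-!
Among the primitive vectors of `L` (integral coefficient vectors with a unit entry) pick one, `x`,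
of minimal norm; it exists because the unit ball of a local field is compact, `F` being complete
with finite residue field and discrete value group. Exchanging `x` into the basis, the coordinate
of `x + w` along `x` is `1` for every `w` in the span `W` of the remaining basis vectors. Since
the largest coordinate of a vector is the same in all bases of `L`, minimality (after rescaling)
gives `ν x ≤ ν (x + w)`, and hence `ν (a • x + w) = max (ν (a • x)) (ν w)`. Induction on the rank,
applied to the lattice spanned by the remaining vectors, finishes the proof.
-/

/-- An abstract (non-archimedean, multiplicative) absolute value on a field `F`. -/
structure NAAbs (F : Type*) [Field F] where
  abs : F → ℝ
  nonneg : ∀ a, 0 ≤ abs a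
  eq_zero : ∀ a, abs a = 0 ↔ a = 0
  map_mul : ∀ a b, abs (a * b) = abs a * abs b
  ultra : ∀ a b, abs (a + b) ≤ max (abs a) (abs b)

/-- `F` together with `A` is a non-archimedean *local* field with uniformizer `π`:
the value group is discrete with generator `|π| < 1`, the residue field is finite,
and `F` is complete. -/
def NAAbs.IsLocal {F : Type*} [Field F] (A : NAAbs F) (π : F) : Prop :=
  π ≠ 0 ∧ A.abs π < 1 ∧ (∀ a : F, A.abs a < 1 → A.abs a ≤ A.abs π) ∧
  (∃ S : Finset F, ∀ a : F, A.abs a ≤ 1 → ∃ s ∈ S, A.abs (a - s) < 1) ∧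
  (∀ f : ℕ → F, (∀ ε : ℝ, 0 < ε → ∃ N, ∀ m ≥ N, ∀ n ≥ N, A.abs (f m - f n) < ε) →
    ∃ x : F, ∀ ε : ℝ, 0 < ε → ∃ N, ∀ n ≥ N, A.abs (f n - x) < ε)

/-- A non-archimedean norm on an `F`-vector space `V`, relative to the absolute value `A`. -/
structure NANorm {F : Type*} [Field F] (A : NAAbs F)
    (V : Type*) [AddCommGroup V] [Module F V] where
  nu : V → ℝ
  nonneg : ∀ v, 0 ≤ nu v
  eq_zero : ∀ v, nu v = 0 ↔ v = 0
  smul_eq : ∀ (a : F) (v : V), nu (a • v) = A.abs a * nu v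
  ultra : ∀ u v, nu (u + v) ≤ max (nu u) (nu v)

/-- `b` is an `O_F`-basis of the `O_F`-lattice `L ⊆ V`. -/
def IsLatticeBasis {F : Type*} [Field F] (A : NAAbs F)
    {V : Type*} [AddCommGroup V] [Module F V]
    {ι : Type*} [Fintype ι] (b : ι → V) (L : Set V) : Prop :=
  LinearIndependent F b ∧
  ∀ v : V, v ∈ L ↔ ∃ c : ι → F, (∀ i, A.abs (c i) ≤ 1) ∧ v = ∑ i, c i • b i

/-- `b` is orthogonal with respect to the norm(-like function) `νn`. -/
def IsOrthogonalFor {F : Type*} [Field F] (A : NAAbs F)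
    {V : Type*} [AddCommGroup V] [Module F V]
    {ι : Type*} [Fintype ι] (νn : V → ℝ) (b : ι → V) : Prop :=
  ∀ c : ι → F, νn (∑ i, c i • b i) = ⨆ i, νn (c i • b i)

namespace NAAbs

variable {F : Type*} [Field F] (A : NAAbs F) {ι κ : Type*} [Fintype ι]

def toAbsoluteValue : AbsoluteValue F ℝ where
  toFun := A.abs
  map_mul' := A.map_mul
  nonneg' := A.nonneg
  eq_zero' := A.eq_zero
  add_le' a b := (A.ultra a b).trans (max_le_add_of_nonneg (A.nonneg a) (A.nonneg b))

@[simp] theorem abs_zero : A.abs 0 = 0 := A.toAbsoluteValue.map_zero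

@[simp] theorem abs_one : A.abs 1 = 1 := A.toAbsoluteValue.map_one

@[simp] theorem abs_neg (a : F) : A.abs (-a) = A.abs a := A.toAbsoluteValue.map_neg a

@[simp] theorem abs_inv (a : F) : A.abs a⁻¹ = (A.abs a)⁻¹ := map_inv₀ A.toAbsoluteValue a

@[simp] theorem abs_pow (a : F) (k : ℕ) : A.abs (a ^ k) = A.abs a ^ k :=
  map_pow A.toAbsoluteValue a k

def IsPrimitive (c : ι → F) : Prop :=
  (∀ i, A.abs (c i) ≤ 1) ∧ ∃ j, A.abs (c j) = 1

theorem abs_sum_le_one {s : Finset κ} {f : κ → F} (hf : ∀ k ∈ s, A.abs (f k) ≤ 1) :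
    A.abs (∑ k ∈ s, f k) ≤ 1 :=
  Finset.sum_induction f (fun a => A.abs a ≤ 1)
    (fun a b ha hb => (A.ultra a b).trans (max_le ha hb)) (by simp) hf

noncomputable abbrev toNormedField : NormedField F := A.toAbsoluteValue.toNormedField

variable {A}

open Finset in
theorem IsLocal.exists_finset_abs_sub_le_pow {π : F} (hloc : A.IsLocal π) (m : ℕ) :
    ∃ T : Finset F, ∀ x, A.abs x ≤ 1 → ∃ t ∈ T, A.abs (x - t) ≤ A.abs π ^ m := by
  classical
  obtain ⟨hπ0, -, hπsmall, ⟨S, hS⟩, -⟩ := hloc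
  have hπpos : 0 < A.abs π := A.toAbsoluteValue.pos hπ0
  induction m with
  | zero => exact ⟨{0}, fun x hx => ⟨0, mem_singleton_self 0, by simpa using hx⟩⟩
  | succ m ih =>
    obtain ⟨T, hT⟩ := ih
    refine ⟨(T ×ˢ S).image fun p => p.1 + p.2 * π ^ m, fun x hx => ?_⟩
    obtain ⟨t, ht, hxt⟩ := hT x hx
    have hπm : π ^ m ≠ 0 := pow_ne_zero m hπ0
    -- the next digit `s` is read off from the rescaled remainder `(x - t) / π ^ m`
    obtain ⟨s, hs, hys⟩ := hS ((x - t) / π ^ m) (by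
      rw [div_eq_mul_inv, A.map_mul, abs_inv, abs_pow, ← div_eq_mul_inv]
      exact div_le_one_of_le₀ hxt (by positivity))
    refine ⟨t + s * π ^ m, mem_image.2 ⟨(t, s), mem_product.2 ⟨ht, hs⟩, rfl⟩, ?_⟩
    have hrem : x - (t + s * π ^ m) = ((x - t) / π ^ m - s) * π ^ m := by
      field_simp; ring
    rw [hrem, A.map_mul, abs_pow, pow_succ']
    exact mul_le_mul_of_nonneg_right (hπsmall _ hys) (by positivity)

theorem IsLocal.isCompact_closedBall {π : F} (hloc : A.IsLocal π) :
    letI := A.toNormedField; IsCompact (Metric.closedBall (0 : F) 1) := by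
  let := A.toNormedField
  have hdist (x y : F) : dist x y = A.abs (x - y) := dist_eq_norm x y
  have : CompleteSpace F := Metric.complete_of_cauchySeq_tendsto fun u hu => by
    obtain ⟨x, hx⟩ := hloc.2.2.2.2 u (by simpa only [hdist] using Metric.cauchySeq_iff.1 hu)
    exact ⟨x, Metric.tendsto_atTop.2 (by simpa only [hdist] using hx)⟩
  refine TotallyBounded.isCompact_of_isClosed (Metric.totallyBounded_iff.2 fun ε hε => ?_)
    Metric.isClosed_closedBall
  obtain ⟨m, hm⟩ := exists_pow_lt_of_lt_one hε hloc.2.1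
  obtain ⟨T, hT⟩ := hloc.exists_finset_abs_sub_le_pow m
  refine ⟨T, T.finite_toSet, fun x hx => ?_⟩
  obtain ⟨t, ht, hxt⟩ := hT x (by simpa [hdist] using hx)
  exact Set.mem_iUnion₂.2 ⟨t, ht, by rw [Metric.mem_ball, hdist]; exact hxt.trans_lt hm⟩

end NAAbs

theorem sum_smul_sum_smul {F V ι κ : Type*} [Field F] [AddCommGroup V] [Module F V]
    [Fintype ι] [Fintype κ] (c : κ → F) (D : κ → ι → F) (b : ι → V) :
    ∑ k, c k • ∑ i, D k i • b i = ∑ i, (∑ k, c k * D k i) • b i := by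
  simp only [Finset.smul_sum, smul_smul, Finset.sum_smul]
  exact Finset.sum_comm

namespace NAAbs

open Submodule

variable {F : Type*} [Field F] (A : NAAbs F) {V : Type*} [AddCommGroup V] [Module F V]
  {ι κ : Type*} [Fintype ι] [Fintype κ]

def integralSpan (b : ι → V) : Set V :=
  {v | ∃ c : ι → F, (∀ i, A.abs (c i) ≤ 1) ∧ v = ∑ i, c i • b i}

theorem isLatticeBasis_iff {b : ι → V} {L : Set V} :
    IsLatticeBasis A b L ↔ LinearIndependent F b ∧ L = A.integralSpan b := by
  simp [IsLatticeBasis, Set.ext_iff, integralSpan]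

theorem mem_integralSpan_self (b : ι → V) (i : ι) : b i ∈ A.integralSpan b := by
  classical
  refine ⟨Pi.single i 1, fun j => ?_, by simp [Pi.single_apply]⟩
  rcases eq_or_ne j i with rfl | hj <;> simp [*]

theorem integralSpan_subset_integralSpan {b : ι → V} {g : κ → V}
    (h : ∀ k, g k ∈ A.integralSpan b) : A.integralSpan g ⊆ A.integralSpan b := by
  choose D hD hg using h
  rintro _ ⟨c, hc, rfl⟩
  refine ⟨fun i => ∑ k, c k * D k i, fun i => A.abs_sum_le_one fun k _ => ?_, ?_⟩
  · rw [A.map_mul]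
    exact mul_le_one₀ (hc k) (A.nonneg _) (hD k i)
  · simp_rw [hg]
    exact sum_smul_sum_smul c D b

theorem span_integralSpan (b : ι → V) : span F (A.integralSpan b) = span F (Set.range b) := by
  refine le_antisymm (span_le.2 ?_)
    (span_mono (Set.range_subset_iff.2 (A.mem_integralSpan_self b)))
  rintro _ ⟨c, -, rfl⟩
  exact sum_mem fun i _ => smul_mem _ _ (subset_span ⟨i, rfl⟩)

theorem span_eq_of_integralSpan_eq {b : ι → V} {g : κ → V}
    (h : A.integralSpan g = A.integralSpan b) : span F (Set.range g) = span F (Set.range b) := by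
  rw [← span_integralSpan, h, span_integralSpan]

variable {A} in
theorem _root_.IsLatticeBasis.of_integralSpan_eq {b g : ι → V} {L : Set V}
    (hb : IsLatticeBasis A b L) (h : A.integralSpan g = A.integralSpan b) :
    IsLatticeBasis A g L := by
  rw [isLatticeBasis_iff] at hb ⊢
  refine ⟨?_, hb.2.trans h.symm⟩
  have hli := hb.1
  rw [linearIndependent_iff_card_eq_finrank_span] at hli ⊢
  rw [hli, Set.finrank, Set.finrank, A.span_eq_of_integralSpan_eq h]

theorem integralSpan_cons {n : ℕ} (x : V) (v : Fin n → V) :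
    A.integralSpan (Fin.cons x v : Fin (n + 1) → V) =
      {y | ∃ a, A.abs a ≤ 1 ∧ ∃ z ∈ A.integralSpan v, y = a • x + z} := by
  ext y
  simp only [integralSpan, Set.mem_ofPred_eq, Fin.exists_fin_succ_pi, Fin.forall_fin_succ,
    Fin.cons_zero, Fin.cons_succ, Fin.sum_univ_succ]
  constructor
  · rintro ⟨a, c, ⟨ha, hc⟩, rfl⟩
    exact ⟨a, ha, _, ⟨c, hc, rfl⟩, rfl⟩
  · rintro ⟨a, ha, _, ⟨c, hc, rfl⟩, rfl⟩
    exact ⟨a, c, ⟨ha, hc⟩, rfl⟩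

theorem integralSpan_cons_congr {n : ℕ} (x : V) {u v : Fin n → V}
    (h : A.integralSpan u = A.integralSpan v) :
    A.integralSpan (Fin.cons x u : Fin (n + 1) → V) = A.integralSpan (Fin.cons x v) := by
  rw [integralSpan_cons, integralSpan_cons, h]

theorem integralSpan_cons_sum_smul {n : ℕ} (b : Fin (n + 1) → V) {e : Fin (n + 1) → F}
    (he : ∀ i, A.abs (e i) ≤ 1) {j : Fin (n + 1)} (hej : A.abs (e j) = 1) :
    A.integralSpan (Fin.cons (∑ i, e i • b i) (b ∘ j.succAbove) : Fin (n + 1) → V) =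
      A.integralSpan b := by
  have hej0 : e j ≠ 0 := fun h => by simp [h] at hej
  apply subset_antisymm <;> apply integralSpan_subset_integralSpan
  · refine Fin.cases ⟨e, he, rfl⟩ fun k => ?_
    simpa using A.mem_integralSpan_self b (j.succAbove k)
  · intro i
    rcases eq_or_ne i j with rfl | hij
    · rw [integralSpan_cons]
      refine ⟨(e i)⁻¹, by simp [hej], _,
        ⟨fun k => -((e i)⁻¹ * e (i.succAbove k)), fun k => by simp [A.map_mul, hej, he], rfl⟩, ?_⟩
      simp [Fin.sum_univ_succAbove _ i, smul_add, Finset.smul_sum, smul_smul, hej0, neg_smul]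
    · obtain ⟨k, rfl⟩ := Fin.exists_succAbove_eq hij
      simpa using A.mem_integralSpan_self (Fin.cons (∑ i, e i • b i) (b ∘ j.succAbove)) k.succ

theorem exists_abs_le_of_sum_smul_eq [Nonempty ι] {b : ι → V} {g : κ → V}
    (hg : LinearIndependent F g) (hb : ∀ i, b i ∈ A.integralSpan g) {c : ι → F} {d : κ → F}
    (h : ∑ i, c i • b i = ∑ k, d k • g k) (k : κ) : ∃ i, A.abs (d k) ≤ A.abs (c i) := by
  choose D hD hbD using hb
  have hd : d k = ∑ i, c i * D i k := by
    refine (Fintype.linearIndependent_iffₛ.1 hg (fun k => ∑ i, c i * D i k) d ?_ k).symm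
    rw [← sum_smul_sum_smul, ← h]
    simp_rw [← hbD]
  obtain ⟨i, -, hi⟩ := IsNonarchimedean.finset_image_add A.abs_zero A.nonneg A.ultra
    (fun i => c i * D i k) Finset.univ
  refine ⟨i, hd ▸ hi.trans ?_⟩
  rw [A.map_mul]
  exact mul_le_of_le_one_right (A.nonneg _) (hD i k)

end NAAbs

namespace NANorm

open Submodule

variable {F : Type*} [Field F] {A : NAAbs F} {V : Type*} [AddCommGroup V] [Module F V]
  (ν : NANorm A V) {ι : Type*} [Fintype ι]

@[simp] theorem nu_zero : ν.nu 0 = 0 := (ν.eq_zero 0).2 rfl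

theorem nu_neg (x : V) : ν.nu (-x) = ν.nu x := by
  rw [← neg_one_smul F x, ν.smul_eq, A.abs_neg, A.abs_one, one_mul]

theorem nu_add_le (x y : V) : ν.nu (x + y) ≤ ν.nu x + ν.nu y :=
  IsNonarchimedean.add_le ν.nonneg ν.ultra

theorem continuous_nu_sum_smul (b : ι → V) :
    letI := A.toNormedField; Continuous fun c : ι → F => ν.nu (∑ i, c i • b i) := by
  let := A.toNormedField
  refine (LipschitzWith.of_le_add_mul' (∑ i, ν.nu (b i)) fun c d => ?_).continuous
  have hsplit : ∑ i, c i • b i = ∑ i, d i • b i + ∑ i, (c i - d i) • b i := by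
    rw [← Finset.sum_add_distrib]; simp [← add_smul]
  calc ν.nu (∑ i, c i • b i)
      ≤ ν.nu (∑ i, d i • b i) + ∑ i, ν.nu ((c i - d i) • b i) := by
        rw [hsplit]
        exact (ν.nu_add_le _ _).trans
          (by gcongr; exact Finset.le_sum_of_subadditive _ ν.nu_zero.le ν.nu_add_le _ _)
    _ ≤ ν.nu (∑ i, d i • b i) + ∑ i, dist c d * ν.nu (b i) := by
        gcongr with i
        rw [ν.smul_eq]
        exact mul_le_mul_of_nonneg_right ((dist_eq_norm (c i) (d i)).symm.trans_le
          (dist_le_pi_dist c d i)) (ν.nonneg _)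
    _ = ν.nu (∑ i, d i • b i) + (∑ i, ν.nu (b i)) * dist c d := by
        rw [← Finset.mul_sum, mul_comm]

theorem exists_isPrimitive_isMin {π : F} (hloc : A.IsLocal π) [Nonempty ι] (b : ι → V) :
    ∃ e : ι → F, A.IsPrimitive e ∧
      ∀ d : ι → F, A.IsPrimitive d → ν.nu (∑ i, e i • b i) ≤ ν.nu (∑ i, d i • b i) := by
  let := A.toNormedField
  have habs (i : ι) : Continuous fun c : ι → F => A.abs (c i) :=
    show Continuous fun c : ι → F => ‖c i‖ from (continuous_apply i).norm
  have hclosed : IsClosed {c : ι → F | A.IsPrimitive c} := by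
    simp only [NAAbs.IsPrimitive, Set.ofPred_and, Set.ofPred_forall, Set.ofPred_exists]
    exact (isClosed_iInter fun i => isClosed_le (habs i) continuous_const).inter
      (isClosed_iUnion_of_finite fun i => isClosed_eq (habs i) continuous_const)
  have hcompact : IsCompact {c : ι → F | A.IsPrimitive c} :=
    (isCompact_univ_pi fun _ => hloc.isCompact_closedBall).of_isClosed_subset hclosed
      fun c hc => Set.mem_univ_pi.2 fun i => mem_closedBall_zero_iff.2 (hc.1 i)
  obtain ⟨e, he, hmin⟩ := hcompact.exists_isMinOn
    ⟨fun _ => 1, fun _ => A.abs_one.le, Classical.arbitrary ι, A.abs_one⟩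
    (ν.continuous_nu_sum_smul b).continuousOn
  exact ⟨e, he, fun d hd => hmin hd⟩

/-- Rescaling a coefficient vector by the inverse of its largest entry makes it primitive. -/
theorem abs_mul_nu_le_of_isMin {b : ι → V} {x : V}
    (hmin : ∀ d : ι → F, A.IsPrimitive d → ν.nu x ≤ ν.nu (∑ i, d i • b i))
    (c : ι → F) (i : ι) : A.abs (c i) * ν.nu x ≤ ν.nu (∑ i, c i • b i) := by
  have : Nonempty ι := ⟨i⟩
  obtain ⟨j, hj⟩ := Finite.exists_max fun i => A.abs (c i)
  rcases eq_or_ne (c j) 0 with hcj | hcj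
  · have hci : A.abs (c i) = 0 := le_antisymm (by simpa [hcj] using hj i) (A.nonneg _)
    rw [hci, zero_mul]
    exact ν.nonneg _
  have hcj' : 0 < A.abs (c j) := A.toAbsoluteValue.pos hcj
  have hprim : A.IsPrimitive ((c j)⁻¹ • c) := by
    refine ⟨fun k => ?_, j, ?_⟩
    · simpa [A.map_mul, inv_mul_le_iff₀ hcj'] using hj k
    · simp [A.map_mul, hcj'.ne']
  have hscaled := hmin _ hprim
  simp only [Pi.smul_apply, smul_eq_mul, mul_smul, ← Finset.smul_sum, ν.smul_eq, A.abs_inv]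
    at hscaled
  calc A.abs (c i) * ν.nu x ≤ A.abs (c j) * ν.nu x :=
        mul_le_mul_of_nonneg_right (hj i) (ν.nonneg x)
    _ ≤ ν.nu (∑ i, c i • b i) := by rwa [← le_inv_mul_iff₀ hcj']

theorem isOrthogonalFor_iff (u : ι → V) :
    IsOrthogonalFor A ν.nu u ↔
      ∀ (c : ι → F) (i : ι), ν.nu (c i • u i) ≤ ν.nu (∑ i, c i • u i) := by
  have hbdd (c : ι → F) := (Set.finite_range fun i => ν.nu (c i • u i)).bddAbove
  refine ⟨fun h c i => (h c).symm ▸ le_ciSup (hbdd c) i, fun h c => ?_⟩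
  cases isEmpty_or_nonempty ι
  · simp
  refine le_antisymm ?_ (ciSup_le (h c))
  obtain ⟨i, -, hi⟩ := IsNonarchimedean.finset_image_add ν.nu_zero ν.nonneg ν.ultra
    (fun i => c i • u i) Finset.univ
  exact hi.trans (le_ciSup (hbdd c) i)

theorem nu_le_nu_add_of_isMin [Nonempty ι] {n : ℕ} {b : ι → V} {x : V} {v : Fin n → V}
    (hli : LinearIndependent F (Fin.cons x v : Fin (n + 1) → V))
    (hspan : A.integralSpan (Fin.cons x v : Fin (n + 1) → V) = A.integralSpan b)
    (hmin : ∀ d : ι → F, A.IsPrimitive d → ν.nu x ≤ ν.nu (∑ i, d i • b i))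
    {w : V} (hw : w ∈ span F (Set.range v)) : ν.nu x ≤ ν.nu (x + w) := by
  obtain ⟨c, rfl⟩ := (mem_span_range_iff_exists_fun F).1 hw
  have hsum : ∑ i, (Fin.cons 1 c : Fin (n + 1) → F) i • (Fin.cons x v : Fin (n + 1) → V) i =
      x + ∑ k, c k • v k := by
    simp [Fin.sum_univ_succ]
  have hmem : x + ∑ k, c k • v k ∈ span F (Set.range b) := by
    rw [← A.span_eq_of_integralSpan_eq hspan, ← hsum]
    exact sum_mem fun i _ => smul_mem _ _ (subset_span ⟨i, rfl⟩)
  obtain ⟨c', hc'⟩ := (mem_span_range_iff_exists_fun F).1 hmem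
  -- the coordinate of `x + w` along `x` is `1`, so some `b`-coordinate has absolute value `≥ 1`
  obtain ⟨i, hi⟩ := A.exists_abs_le_of_sum_smul_eq hli
    (fun i => hspan ▸ A.mem_integralSpan_self b i) (hc'.trans hsum.symm) 0
  calc ν.nu x = A.abs 1 * ν.nu x := by rw [A.abs_one, one_mul]
    _ ≤ A.abs (c' i) * ν.nu x := mul_le_mul_of_nonneg_right (by simpa using hi) (ν.nonneg x)
    _ ≤ ν.nu (x + ∑ k, c k • v k) := hc' ▸ ν.abs_mul_nu_le_of_isMin hmin c' i

theorem nu_le_nu_smul_add {x : V} {W : Submodule F V} (hx : ∀ w ∈ W, ν.nu x ≤ ν.nu (x + w))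
    (a : F) {w : V} (hw : w ∈ W) :
    ν.nu (a • x) ≤ ν.nu (a • x + w) ∧ ν.nu w ≤ ν.nu (a • x + w) := by
  have hax : ν.nu (a • x) ≤ ν.nu (a • x + w) := by
    rcases eq_or_ne a 0 with rfl | ha
    · simpa using ν.nonneg w
    calc ν.nu (a • x) = A.abs a * ν.nu x := ν.smul_eq a x
      _ ≤ A.abs a * ν.nu (x + a⁻¹ • w) :=
        mul_le_mul_of_nonneg_left (hx _ (W.smul_mem _ hw)) (A.nonneg a)
      _ = ν.nu (a • x + w) := by rw [← ν.smul_eq, smul_add, smul_inv_smul₀ ha]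
  refine ⟨hax, ?_⟩
  calc ν.nu w = ν.nu (a • x + w + -(a • x)) := by rw [add_neg_cancel_comm]
    _ ≤ max (ν.nu (a • x + w)) (ν.nu (-(a • x))) := ν.ultra _ _
    _ = ν.nu (a • x + w) := by rw [ν.nu_neg, max_eq_left hax]

theorem isOrthogonalFor_cons {n : ℕ} {x : V} {u : Fin n → V}
    (hx : ∀ w ∈ span F (Set.range u), ν.nu x ≤ ν.nu (x + w)) (hu : IsOrthogonalFor A ν.nu u) :
    IsOrthogonalFor A ν.nu (Fin.cons x u : Fin (n + 1) → V) := by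
  rw [isOrthogonalFor_iff] at hu ⊢
  intro c i
  have hw : ∑ k, c k.succ • u k ∈ span F (Set.range u) :=
    sum_mem fun k _ => smul_mem _ _ (subset_span ⟨k, rfl⟩)
  have hsplit := ν.nu_le_nu_smul_add hx (c 0) hw
  rw [Fin.sum_univ_succ]
  refine Fin.cases ?_ (fun k => ?_) i
  · simpa using hsplit.1
  · simpa using (hu _ k).trans hsplit.2

theorem exists_isLatticeBasis_isOrthogonalFor {π : F} (hloc : A.IsLocal π) {n : ℕ}
    (b : Fin n → V) (L : Set V) (hb : IsLatticeBasis A b L) :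
    ∃ u : Fin n → V, IsLatticeBasis A u L ∧ IsOrthogonalFor A ν.nu u := by
  induction n generalizing L with
  | zero => exact ⟨b, hb, (ν.isOrthogonalFor_iff b).2 fun _ i => i.elim0⟩
  | succ n ih =>
    obtain ⟨e, ⟨he, j, hej⟩, hmin⟩ := ν.exists_isPrimitive_isMin hloc b
    have hspan := A.integralSpan_cons_sum_smul b he hej
    have hg := hb.of_integralSpan_eq hspan
    obtain ⟨u, hu, hu_orth⟩ := ih (b ∘ j.succAbove) _
      (A.isLatticeBasis_iff.2 ⟨(linearIndependent_finCons.1 hg.1).1, rfl⟩)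
    have hu_span := (A.isLatticeBasis_iff.1 hu).2.symm
    refine ⟨Fin.cons _ u, hg.of_integralSpan_eq (A.integralSpan_cons_congr _ hu_span),
      ν.isOrthogonalFor_cons (fun w hw => ?_) hu_orth⟩
    rw [A.span_eq_of_integralSpan_eq hu_span] at hw
    exact ν.nu_le_nu_add_of_isMin hg.1 hspan hmin hw

end NANorm

theorem statement1_general {F : Type*} [Field F] {V : Type*} [AddCommGroup V] [Module F V]
    (A : NAAbs F) (π : F) (hloc : A.IsLocal π)
    (r : ℕ)
    (ν : NANorm A V) (L : Set V) (b : Fin r → V)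
    (hL : IsLatticeBasis A b L) :
    ∃ u : Fin r → V, IsLatticeBasis A u L ∧
      ∀ c : Fin r → F, ν.nu (∑ i, c i • u i) = ⨆ i, ν.nu (c i • u i) :=
  ν.exists_isLatticeBasis_isOrthogonalFor hloc b L hL

/-- Every `O_F`-lattice `L` in an `r`-dimensional vector space over a
non-archimedean local field admits an `O_F`-basis which is orthogonal with respect to a
given non-archimedean norm `ν`. -/
theorem statement1 {F : Type*} [Field F] {V : Type*} [AddCommGroup V] [Module F V]
    (A : NAAbs F) (π : F) (hloc : A.IsLocal π)
    (r : ℕ) (hdim : Module.finrank F V = r)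
    (ν : NANorm A V) (L : Set V) (b : Fin r → V)
    (hL : IsLatticeBasis A b L) :
    ∃ u : Fin r → V, IsLatticeBasis A u L ∧
      ∀ c : Fin r → F, ν.nu (∑ i, c i • u i) = ⨆ i, ν.nu (c i • u i) :=
  statement1_general A π hloc r ν L b hL
end

section
/- Let $F$ be a non-archimedean local field, $\nu$ a norm on $F^r$, and $L$ an $O_F$-lattice in $F^r$. Let $\{u_1,\dots,u_r\}$ be an $O_F$-basis of $L$ orthogonal with respect to $\nu$ and ordered so that $\nu(u_1) \le \cdots \le \nu(u_r)$. Then $\nu(u_i) = \epsilon_{L,i}$ for each $i$, where $\epsilon_{L,i}$ is the minimal $\epsilon > 0$ such that $B_\nu(\epsilon) \cap L$ contains a direct summand of $L$ of rank $i$. Consequently $\prod_{i=1}^r \nu(u_i) = D_\nu(L) := \prod_{i=1}^r \epsilon_{L,i}$, independently of the chosen orthogonal basis. -/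
/-- `B_ν(ε) ∩ L` contains a direct summand of `L` of rank `i` (a direct summand of a free
module over the valuation ring is part of a lattice basis). -/
def ContainsSummand {F : Type*} [Field F] (A : NAAbs F)
    {V : Type*} [AddCommGroup V] [Module F V]
    (r : ℕ) (L : Set V) (νn : V → ℝ) (ε : ℝ) (i : ℕ) : Prop :=
  ∃ b : Fin r → V, IsLatticeBasis A b L ∧
    ∃ S : Finset (Fin r), S.card = i ∧ ∀ j ∈ S, νn (b j) ≤ ε

/-!
An orthogonal basis `u` sorted by norm realises each `ε_{L,i}` by its own first `i + 1` vectors,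
so `ε_{L,i} ≤ ν(u_i)`. Conversely, let `b` be a basis of `L` with `i + 1` vectors of norm at most
`ε < ν(u_i)`. Those vectors span `i + 1` dimensions, so some combination `v` of them, with
coefficients in `O_F` and one coefficient `1`, has vanishing `u`-coordinates below `i`.
Orthogonality bounds every other `u`-coordinate `w_k` by `|w_k| ν(u_k) ≤ ν(v) ≤ ε < ν(u_k)`, so
`|w_k| < 1`, and by discreteness `|w_k| ≤ |π|`. Hence `π⁻¹ v ∈ L`, although its `b`-coordinate
`π⁻¹` is not integral.
-/

section LinearAlgebra

variable {K ι κ : Type*} [Field K] [Fintype ι] [Fintype κ]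

theorem exists_ne_zero_sum_mul_eq_zero_of_card_lt (c : ι → κ → K) (S : Finset ι)
    (h : Fintype.card κ < S.card) :
    ∃ g : ι → K, g ≠ 0 ∧ (∀ j ∉ S, g j = 0) ∧ ∀ k, ∑ j, g j * c j k = 0 := by
  classical
  have hdep : ¬ LinearIndepOn K c (S : Set ι) := fun hind => by
    have := hind.fintype_card_le_finrank
    simp only [Finset.coe_sort_coe, Fintype.card_coe, Module.finrank_fintype_fun_eq_card] at this
    omega
  obtain ⟨g, hg, j, hj, hgj⟩ := not_linearIndepOn_finset_iff.1 hdep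
  refine ⟨fun j => if j ∈ S then g j else 0, fun h0 => hgj (by simpa [hj] using congrFun h0 j),
    fun j hj => if_neg hj, fun k => ?_⟩
  simpa [ite_mul, Finset.sum_ite_mem] using congrFun hg k

end LinearAlgebra

section Absolute

variable {F : Type*} [Field F] (A : NAAbs F)

theorem NAAbs.abs_zero_s2 : A.abs 0 = 0 := (A.eq_zero 0).2 rfl

theorem NAAbs.abs_pos {a : F} (ha : a ≠ 0) : 0 < A.abs a :=
  (A.nonneg a).lt_of_ne fun h => ha ((A.eq_zero a).1 h.symm)

theorem NAAbs.abs_one_s2 : A.abs 1 = 1 := by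
  have h := A.map_mul 1 1
  rw [one_mul] at h
  exact (mul_eq_left₀ (A.abs_pos one_ne_zero).ne').1 h.symm

theorem NAAbs.abs_inv_s2 (a : F) : A.abs a⁻¹ = (A.abs a)⁻¹ := by
  rcases eq_or_ne a 0 with rfl | ha
  · simp [A.abs_zero_s2]
  · refine eq_inv_of_mul_eq_one_left ?_
    rw [← A.map_mul, inv_mul_cancel₀ ha, A.abs_one_s2]

theorem NAAbs.abs_div (a b : F) : A.abs (a / b) = A.abs a / A.abs b := by
  rw [div_eq_mul_inv, A.map_mul, A.abs_inv_s2, div_eq_mul_inv]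

theorem NAAbs.exists_abs_div_le_one {ι : Type*} [Finite ι] {g : ι → F} (hg : g ≠ 0) :
    ∃ j₁, g j₁ ≠ 0 ∧ ∀ j, A.abs (g j / g j₁) ≤ 1 := by
  obtain ⟨j₀, hj₀⟩ := Function.ne_iff.1 hg
  have : Nonempty ι := ⟨j₀⟩
  obtain ⟨j₁, hmax⟩ := Finite.exists_max fun j => A.abs (g j)
  have hj₁ : g j₁ ≠ 0 := fun h0 => hj₀ <| (A.eq_zero _).1 <|
    le_antisymm (by simpa [h0, A.abs_zero_s2] using hmax j₀) (A.nonneg _)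
  exact ⟨j₁, hj₁, fun j => by rw [A.abs_div, div_le_one (A.abs_pos hj₁)]; exact hmax j⟩

variable {A} {π : F}

theorem NAAbs.IsLocal.one_lt_abs_inv (hloc : A.IsLocal π) : 1 < A.abs π⁻¹ := by
  rw [A.abs_inv_s2]
  exact one_lt_inv₀ (A.abs_pos hloc.1) |>.2 hloc.2.1

theorem NAAbs.IsLocal.abs_inv_mul_le_one (hloc : A.IsLocal π) {x : F} (hx : A.abs x < 1) :
    A.abs (π⁻¹ * x) ≤ 1 := by
  rw [A.map_mul, A.abs_inv_s2, inv_mul_le_one₀ (A.abs_pos hloc.1)]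
  exact hloc.2.2.1 x hx

end Absolute

section Lattice

variable {F : Type*} [Field F] {A : NAAbs F} {V : Type*} [AddCommGroup V] [Module F V]
  {ι κ : Type*} [Fintype ι] [Fintype κ] {L : Set V}

theorem NANorm.nu_sum_le {α : Type*} (ν : NANorm A V) (s : Finset α) (f : α → V) {C : ℝ}
    (hC : 0 ≤ C) (h : ∀ j ∈ s, ν.nu (f j) ≤ C) : ν.nu (∑ j ∈ s, f j) ≤ C :=
  Finset.sum_induction f (fun v => ν.nu v ≤ C)
    (fun _ _ hv hw => (ν.ultra _ _).trans (max_le hv hw)) (by rwa [(ν.eq_zero 0).2 rfl]) h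

theorem IsOrthogonalFor.abs_mul_le {ν : NANorm A V} {u : κ → V} (huo : IsOrthogonalFor A ν.nu u)
    (w : κ → F) (k : κ) : A.abs (w k) * ν.nu (u k) ≤ ν.nu (∑ k, w k • u k) := by
  rw [huo, ← ν.smul_eq]
  exact le_ciSup (f := fun k => ν.nu (w k • u k)) (Set.finite_range _).bddAbove k

theorem IsLatticeBasis.abs_le_one_of_sum_mem {b : ι → V} (hb : IsLatticeBasis A b L)
    {c : ι → F} (hc : ∑ j, c j • b j ∈ L) (j : ι) : A.abs (c j) ≤ 1 := by
  obtain ⟨d, hd, hcd⟩ := (hb.2 _).1 hc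
  rw [Fintype.linearIndependent_iffₛ.1 hb.1 c d hcd j]
  exact hd j

theorem IsLatticeBasis.nu_pos {ν : NANorm A V} {b : ι → V} (hb : IsLatticeBasis A b L)
    (j : ι) : 0 < ν.nu (b j) :=
  (ν.nonneg _).lt_of_ne fun h => hb.1.ne_zero j ((ν.eq_zero _).1 h.symm)

theorem IsLatticeBasis.mem {b : ι → V} (hb : IsLatticeBasis A b L) (j : ι) : b j ∈ L := by
  classical
  refine (hb.2 _).2 ⟨Pi.single j 1, fun k => ?_, by simp [Pi.single_apply, ite_smul]⟩
  rcases eq_or_ne k j with rfl | hk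
  · simp [A.abs_one_s2]
  · simp [hk, A.abs_zero_s2]

theorem IsLatticeBasis.exists_one_le_abs_coeff {π : F} (hloc : A.IsLocal π) {b : ι → V}
    {u : κ → V} (hb : IsLatticeBasis A b L) (hu : IsLatticeBasis A u L) {a : ι → F} {w : κ → F}
    (hv : ∑ j, a j • b j = ∑ k, w k • u k) {j₁ : ι} (ha : A.abs (a j₁) = 1) :
    ∃ k, 1 ≤ A.abs (w k) := by
  by_contra! hw
  have hmem : π⁻¹ • ∑ k, w k • u k ∈ L :=
    (hu.2 _).2 ⟨fun k => π⁻¹ * w k, fun k => hloc.abs_inv_mul_le_one (hw k),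
      by simp only [Finset.smul_sum, smul_smul]⟩
  rw [← hv, Finset.smul_sum] at hmem
  simp only [smul_smul] at hmem
  have h := hb.abs_le_one_of_sum_mem hmem j₁
  rw [A.map_mul, ha, mul_one] at h
  exact hloc.one_lt_abs_inv.not_ge h

theorem IsLatticeBasis.containsSummand_nu {r : ℕ} {νn : V → ℝ} {u : Fin r → V}
    (hu : IsLatticeBasis A u L) (hmono : Monotone (νn ∘ u)) (i : Fin r) :
    ContainsSummand A r L νn (νn (u i)) (i + 1) :=
  ⟨u, hu, Finset.Iic i, Fin.card_Iic i, fun _ hj => hmono (Finset.mem_Iic.1 hj)⟩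

theorem IsOrthogonalFor.nu_le_of_containsSummand {π : F} (hloc : A.IsLocal π) {r : ℕ}
    {ν : NANorm A V} {u : Fin r → V} (hu : IsLatticeBasis A u L)
    (huo : IsOrthogonalFor A ν.nu u) (hmono : Monotone (ν.nu ∘ u)) (i : Fin r) {e : ℝ}
    (he : ContainsSummand A r L ν.nu e (i + 1)) : ν.nu (u i) ≤ e := by
  obtain ⟨b, hb, S, hScard, hSe⟩ := he
  by_contra! hlt
  choose c hc using fun j => ((hu.2 (b j)).1 (hb.mem j)).imp fun _ => And.right
  obtain ⟨g, hg0, hgS, hg⟩ := exists_ne_zero_sum_mul_eq_zero_of_card_lt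
    (fun j (k : Fin i) => c j (Fin.castLE i.is_lt.le k)) S (by simp [hScard])
  obtain ⟨j₁, hj₁, hgle⟩ := A.exists_abs_div_le_one hg0
  have hj₁S : j₁ ∈ S := by by_contra h; exact hj₁ (hgS j₁ h)
  set a : Fin r → F := fun j => g j / g j₁
  set w : Fin r → F := fun k => ∑ j, a j * c j k
  have hv : ∑ j, a j • b j = ∑ k, w k • u k := by
    simp only [w, hc, Finset.smul_sum, smul_smul, Finset.sum_smul]
    exact Finset.sum_comm
  -- `w` is `(g j₁)⁻¹` times the relation `g` among the first `i` coordinates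
  have hw_low : ∀ k : Fin r, k < i → w k = 0 := fun k hk => by
    simpa [w, a, div_eq_inv_mul, mul_assoc, ← Finset.mul_sum, hj₁] using hg ⟨k, hk⟩
  have hv_le : ν.nu (∑ j, a j • b j) ≤ e := by
    refine ν.nu_sum_le _ _ ((ν.nonneg _).trans (hSe j₁ hj₁S)) fun j _ => ?_
    rw [ν.smul_eq]
    by_cases hj : j ∈ S
    · exact (mul_le_of_le_one_left (ν.nonneg _) (hgle j)).trans (hSe j hj)
    · simpa [a, hgS j hj, A.abs_zero_s2] using (ν.nonneg _).trans (hSe j₁ hj₁S)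
  obtain ⟨k, hk⟩ := hb.exists_one_le_abs_coeff hloc hu hv (j₁ := j₁)
    (by simp [a, div_self hj₁, A.abs_one_s2])
  rcases lt_or_ge k i with hki | hik
  · rw [hw_low k hki, A.abs_zero_s2] at hk
    exact zero_lt_one.not_ge hk
  · have hwk := huo.abs_mul_le w k
    rw [← hv] at hwk
    have hik' : ν.nu (u i) ≤ ν.nu (u k) := hmono hik
    linarith [le_mul_of_one_le_left (ν.nonneg (u k)) hk]

end Lattice

theorem statement2_general {F : Type*} [Field F] (A : NAAbs F) (π : F) (hloc : A.IsLocal π)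
    (r : ℕ) (ν : NANorm A (Fin r → F)) (L : Set (Fin r → F))
    (u : Fin r → (Fin r → F))
    (hu : IsLatticeBasis A u L)
    (huo : IsOrthogonalFor A ν.nu u)
    (hmono : ∀ i j : Fin r, i ≤ j → ν.nu (u i) ≤ ν.nu (u j))
    (ε : Fin r → ℝ)
    (hεmem : ∀ i : Fin r, ContainsSummand A r L ν.nu (ε i) (i + 1))
    (hεmin : ∀ i : Fin r, ∀ ε' : ℝ, 0 < ε' →
      ContainsSummand A r L ν.nu ε' (i + 1) → ε i ≤ ε') :
    (∀ i : Fin r, ν.nu (u i) = ε i) ∧ ∏ i, ν.nu (u i) = ∏ i, ε i := by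
  have hsorted : Monotone (ν.nu ∘ u) := fun i j => hmono i j
  have hnu : ∀ i, ν.nu (u i) = ε i := fun i =>
    le_antisymm (huo.nu_le_of_containsSummand hloc hu hsorted i (hεmem i))
      (hεmin i _ (hu.nu_pos i) (hu.containsSummand_nu hsorted i))
  exact ⟨hnu, Finset.prod_congr rfl fun i _ => hnu i⟩

/-- For an orthogonal `O_F`-basis `u` of `L` ordered by increasing norm,
`ν(u_i) = ε_{L,i}`, and hence `∏ ν(u_i)` equals the lattice discriminant
`D_ν(L) = ∏ ε_{L,i}`, independently of the chosen orthogonal basis. -/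
theorem statement2 {F : Type*} [Field F] (A : NAAbs F) (π : F) (hloc : A.IsLocal π)
    (r : ℕ) (ν : NANorm A (Fin r → F)) (L : Set (Fin r → F))
    (u : Fin r → (Fin r → F))
    (hu : IsLatticeBasis A u L)
    (huo : IsOrthogonalFor A ν.nu u)
    (hmono : ∀ i j : Fin r, i ≤ j → ν.nu (u i) ≤ ν.nu (u j))
    (ε : Fin r → ℝ)
    (hεpos : ∀ i, 0 < ε i)
    (hεmem : ∀ i : Fin r, ContainsSummand A r L ν.nu (ε i) (i + 1))
    (hεmin : ∀ i : Fin r, ∀ ε' : ℝ, 0 < ε' →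
      ContainsSummand A r L ν.nu ε' (i + 1) → ε i ≤ ε') :
    (∀ i : Fin r, ν.nu (u i) = ε i) ∧ ∏ i, ν.nu (u i) = ∏ i, ε i :=
  statement2_general A π hloc r ν L u hu huo hmono ε hεmem hεmin
end

section
/- Suppose for each nonzero $a \in A$ one has an invertible element $\Delta_a$ of a commutative ring of analytic functions such that $(\Delta_{a_2})^{|a_1|_\infty^r - 1} = (\Delta_{a_1})^{|a_2|_\infty^r - 1}$ for all nonzero $a_1, a_2 \in A$, with $|a|_\infty = q_\infty^{\deg a}$ running over powers of $q_\infty$. Then there exists an invertible analytic function $\Delta$, unique up to multiplication by a $(q_\infty^r - 1)$-th root of unity, with $\Delta^{|a|_\infty^r - 1} = (\Delta_a)^{q_\infty^r - 1}$ for all nonzero $a \in A$. -/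
/-!
Put `n_i = |a_i|^r - 1 = Q ^ d_i - 1` with `Q = q_∞ ^ r`. The exponents `m` for which some `Δ`
satisfies `Δ ^ n_j = Δ_j ^ m` for all `j` form an ideal of `ℤ` (multiply solutions), and the
compatibility relations say it contains every `n_i`. Modulo the ideal spanned by the `n_i`,
the order of `Q` divides every `d_i`, hence is `1`: so `Q - 1` lies in that ideal, which gives
existence. For uniqueness, the quotient `ζ` of two solutions satisfies `ζ ^ n_i = 1`, hence
`ζ ^ (Q - 1) = 1`.
-/

open Set

section CommGroup

variable {G ι : Type*} [CommGroup G]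

theorem exists_zpow_eq_zpow_of_mem_span {x : ι → G} {n : ι → ℤ}
    (compat : ∀ i j, x j ^ n i = x i ^ n j) {m : ℤ} (hm : m ∈ Ideal.span (range n)) :
    ∃ y : G, ∀ j, y ^ n j = x j ^ m := by
  induction hm using Submodule.span_induction with
  | mem _ hm =>
    obtain ⟨i, rfl⟩ := hm
    exact ⟨x i, fun j => (compat i j).symm⟩
  | zero => exact ⟨1, by simp⟩
  | add _ _ _ _ h₁ h₂ =>
    obtain ⟨y₁, hy₁⟩ := h₁
    obtain ⟨y₂, hy₂⟩ := h₂
    exact ⟨y₁ * y₂, fun j => by rw [mul_zpow, hy₁, hy₂, zpow_add]⟩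
  | smul c _ _ h =>
    obtain ⟨y, hy⟩ := h
    exact ⟨y ^ c, fun j => by rw [← zpow_mul, mul_comm, zpow_mul, hy, ← zpow_mul, mul_comm,
      smul_eq_mul]⟩

theorem zpow_eq_one_of_mem_span {ζ : G} {n : ι → ℤ} (h : ∀ i, ζ ^ n i = 1) {m : ℤ}
    (hm : m ∈ Ideal.span (range n)) : ζ ^ m = 1 := by
  have hle : Ideal.span (range n) ≤ Ideal.span {(orderOf ζ : ℤ)} := by
    rw [Ideal.span_le]
    rintro _ ⟨i, rfl⟩
    exact Ideal.mem_span_singleton.2 (orderOf_dvd_iff_zpow_eq_one.2 (h i))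
  exact orderOf_dvd_iff_zpow_eq_one.1 (Ideal.mem_span_singleton.1 (hle hm))

end CommGroup

theorem Ideal.sub_one_mem_of_pow_sub_one_mem {S ι : Type*} [CommRing S] {I : Ideal S} {x : S}
    {d : ι → ℕ} (hgcd : ∀ n : ℕ, (∀ i, n ∣ d i) → n = 1) (h : ∀ i, x ^ d i - 1 ∈ I) :
    x - 1 ∈ I := by
  have hpow : ∀ i, Ideal.Quotient.mk I x ^ d i = 1 := fun i => by
    rw [← map_pow, ← map_one (Ideal.Quotient.mk I), Ideal.Quotient.eq]
    exact h i
  have hord : orderOf (Ideal.Quotient.mk I x) = 1 :=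
    hgcd _ fun i => orderOf_dvd_of_pow_eq_one (hpow i)
  rw [← Ideal.Quotient.eq, map_one]
  exact orderOf_eq_one_iff.1 hord

theorem Int.natCast_sub_one_mem_span_pow_sub_one {ι : Type*} (Q : ℕ) {d : ι → ℕ}
    (hgcd : ∀ n : ℕ, (∀ i, n ∣ d i) → n = 1) :
    ((Q - 1 : ℕ) : ℤ) ∈ Ideal.span (Set.range fun i => ((Q ^ d i - 1 : ℕ) : ℤ)) := by
  rcases Nat.eq_zero_or_pos Q with rfl | hQ
  · simp -- `0 - 1 = 0` in `ℕ`
  rw [Nat.cast_sub hQ, Nat.cast_one]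
  refine Ideal.sub_one_mem_of_pow_sub_one_mem hgcd fun i => Ideal.subset_span ⟨i, ?_⟩
  simp [Nat.cast_sub (Nat.one_le_pow _ _ hQ)]

theorem statement16_general {R : Type*} [CommRing R]
    {ι : Type*}
    (qinf r : ℕ)
    (d : ι → ℕ)
    (hgcd : ∀ n : ℕ, (∀ i, n ∣ d i) → n = 1)
    (Δa : ι → Rˣ)
    (compat : ∀ i j, (Δa j) ^ (qinf ^ (r * d i) - 1) = (Δa i) ^ (qinf ^ (r * d j) - 1)) :
    (∃ Δ : Rˣ, ∀ i, Δ ^ (qinf ^ (r * d i) - 1) = (Δa i) ^ (qinf ^ r - 1)) ∧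
    (∀ Δ Δ' : Rˣ,
      (∀ i, Δ ^ (qinf ^ (r * d i) - 1) = (Δa i) ^ (qinf ^ r - 1)) →
      (∀ i, Δ' ^ (qinf ^ (r * d i) - 1) = (Δa i) ^ (qinf ^ r - 1)) →
      ∃ ζ : Rˣ, ζ ^ (qinf ^ r - 1) = 1 ∧ Δ' = ζ * Δ) := by
  simp only [pow_mul] at compat ⊢
  set Q := qinf ^ r
  have hmem := Int.natCast_sub_one_mem_span_pow_sub_one Q hgcd
  refine ⟨?_, fun Δ Δ' h h' => ⟨Δ' * Δ⁻¹, ?_, by group⟩⟩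
  · have compat' : ∀ i j, Δa j ^ ((Q ^ d i - 1 : ℕ) : ℤ) = Δa i ^ ((Q ^ d j - 1 : ℕ) : ℤ) := by
      simpa only [zpow_natCast] using compat
    obtain ⟨Δ, hΔ⟩ := exists_zpow_eq_zpow_of_mem_span compat' hmem
    exact ⟨Δ, fun i => by exact_mod_cast hΔ i⟩
  · have hζ : ∀ i, (Δ' * Δ⁻¹) ^ ((Q ^ d i - 1 : ℕ) : ℤ) = 1 := fun i => by
      rw [zpow_natCast, mul_pow, inv_pow, h, h', mul_inv_cancel]
    exact_mod_cast zpow_eq_one_of_mem_span hζ hmem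

/-- Existence and uniqueness (up to a `(qinf^r − 1)`-th root of unity) of
the Drinfeld discriminant: given invertible elements `Δa i` (indexed by the nonconstant
elements of `A`, with `|a_i|_∞ = qinf^(d i)` and `gcd of the degrees d i = 1`) satisfying
`(Δa j)^(|a_i|^r − 1) = (Δa i)^(|a_j|^r − 1)`, there is a unit `Δ`, unique up to
`μ_{qinf^r − 1}`, with `Δ^(|a_i|^r − 1) = (Δa i)^(qinf^r − 1)` for all `i`. -/
theorem statement16 {R : Type*} [CommRing R] [IsDomain R]
    {ι : Type*} [Nonempty ι]
    (qinf r : ℕ) (hq : 1 < qinf) (hr : 0 < r)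
    (d : ι → ℕ) (hd : ∀ i, 0 < d i)
    (hgcd : ∀ n : ℕ, (∀ i, n ∣ d i) → n = 1)
    (Δa : ι → Rˣ)
    (compat : ∀ i j, (Δa j) ^ (qinf ^ (r * d i) - 1) = (Δa i) ^ (qinf ^ (r * d j) - 1)) :
    (∃ Δ : Rˣ, ∀ i, Δ ^ (qinf ^ (r * d i) - 1) = (Δa i) ^ (qinf ^ r - 1)) ∧
    (∀ Δ Δ' : Rˣ,
      (∀ i, Δ ^ (qinf ^ (r * d i) - 1) = (Δa i) ^ (qinf ^ r - 1)) →
      (∀ i, Δ' ^ (qinf ^ (r * d i) - 1) = (Δa i) ^ (qinf ^ r - 1)) →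
      ∃ ζ : Rˣ, ζ ^ (qinf ^ r - 1) = 1 ∧ Δ' = ζ * Δ) :=
  statement16_general qinf r d hgcd Δa compat
end

section
/- Let $K/k$ be a finite extension of global function fields of degree $n$, with places $\infty_1,\dots,\infty_m$ of $K$ above $\infty$ of local degrees $n_i = [K_{\infty_i}:k_\infty]$, and let $\mathcal{O}$ be an $A$-order in $K$ with unit group $\mathcal{O}^\times$ and constant subfield $\mathbb{F}_\mathcal{O}$. Define $\ln: K^\times \to \mathbb{R}^m$ by $\ln(\alpha) = (\ln|\alpha|_1,\dots,\ln|\alpha|_m)$ and let $d: \mathbb{R} \to \mathbb{R}^m$ be the diagonal. Then the quotient $\mathfrak{T}(\mathcal{O}) = \mathbb{R}^m/(\ln(\mathcal{O}^\times) + d(\mathbb{R}))$ is compact and its volume with respect to the quotient Lebesgue measure is $\mathrm{vol}(\mathfrak{T}(\mathcal{O})) = \frac{n}{n_1\cdots n_m}\cdot\mathcal{R}(\mathcal{O})$, where $\mathcal{R}(\mathcal{O})$ is the regulator: $\mathcal{R}(\mathcal{O}) = 1$ if $m = 1$, and $\mathcal{R}(\mathcal{O}) = |\det(n_j\ln|u_i|_j)_{1\le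 i,j\le m-1}|$ for generators $u_1,\dots,u_{m-1}$ of $\mathcal{O}^\times/\mathbb{F}_\mathcal{O}^\times$ if $m > 1$. -/
/-!
Write `𝟙` for the diagonal vector. Since the weighted sum `t ↦ ∑ nᵢ tᵢ` is positive on `𝟙` and
kills every `v j`, the family `𝟙, v 0, …, v (m' - 1)` is a basis of `ℝᵐ`; its `ℤ`-span lies in
`G`, so `ℝᵐ ⧸ G` is a quotient of a compact torus. Subtracting the first coordinate from the
others turns `det(𝟙; v)` into the determinant of the basis `t ↦ (t_{i+1} - t_0)` of `Γ`, which
is the covolume of `Γ`. Scaling column `i` of `(𝟙; v)` by `nᵢ` and then adding all columns to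
the last one makes that column `(n, 0, …, 0)`, whence `det(𝟙; v) · ∏ nᵢ = ± n · det(nⱼ vᵢⱼ)`.
-/

open MeasureTheory

namespace Matrix

variable {R : Type*} [CommRing R] {n : ℕ}

theorem det_of_finCons_one (r : Fin n → Fin (n + 1) → R) :
    (of (Fin.cons (fun _ => 1) r : Fin (n + 1) → Fin (n + 1) → R)).det =
      (of fun j i : Fin n => r j i.succ - r j 0).det := by
  set M : Matrix (Fin (n + 1)) (Fin (n + 1)) R := of (Fin.cons (fun _ => 1) r)
  set c : Fin (n + 1) → R := Fin.cons 0 fun _ => 1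
  set D : Matrix (Fin (n + 1)) (Fin (n + 1)) R := of fun j i => M j i - c i * M j 0
  have hMD : M.det = D.det := by
    rw [← det_transpose M, ← det_transpose D]
    refine det_eq_of_forall_row_eq_smul_add_const c 0 rfl fun i j => ?_
    simp [D, c]
  rw [hMD, det_succ_row_zero, Fin.sum_univ_succ]
  simp [D, M, c, submatrix]

theorem det_eq_of_sum_row_succ_eq_zero (A : Matrix (Fin (n + 1)) (Fin (n + 1)) R)
    (h : ∀ i : Fin n, ∑ j, A i.succ j = 0) :
    A.det = (-1) ^ n * (∑ j, A 0 j) * (A.submatrix Fin.succ Fin.castSucc).det := by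
  have hsum : A *ᵥ (fun _ => 1) = Pi.single 0 (∑ j, A 0 j) := by
    ext i
    cases i using Fin.cases <;> simp [mulVec, dotProduct, h]
  -- right multiplication by the unipotent matrix `1.updateCol (Fin.last n) 1`
  have hA : A.det = (A.updateCol (Fin.last n) (A *ᵥ fun _ => 1)).det := by
    have hmul := mul_updateCol A 1 (Fin.last n) fun _ => 1
    rw [A.mul_one] at hmul
    rw [← hmul, det_mul, ← cramer_apply, cramer_one]
    simp
  rw [hA, det_succ_column _ (Fin.last n), Fin.sum_univ_succ]
  simp [hsum, submatrix, Fin.castSucc_lt_last, ne_of_lt]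

end Matrix

theorem LinearIndependent.finCons_of_forall_map_eq_zero {K V : Type*} [Field K] [AddCommGroup V]
    [Module K V] {n : ℕ} {x : V} {v : Fin n → V} (hv : LinearIndependent K v) (f : V →ₗ[K] K)
    (hx : f x ≠ 0) (hf : ∀ j, f (v j) = 0) : LinearIndependent K (Fin.cons x v) := by
  refine linearIndependent_finCons.mpr ⟨hv, fun hmem => hx ?_⟩
  have hspan : Submodule.span K (Set.range v) ≤ LinearMap.ker f :=
    Submodule.span_le.mpr (Set.range_subset_iff.mpr hf)
  exact hspan hmem

theorem compactSpace_quotient_of_span_int_le {E ι : Type*} [NormedAddCommGroup E]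
    [NormedSpace ℝ E] [Finite ι] (b : Module.Basis ι ℝ E) {G : AddSubgroup E}
    (hG : (Submodule.span ℤ (Set.range b)).toAddSubgroup ≤ G) : CompactSpace (E ⧸ G) := by
  have := Module.Finite.of_basis b
  have hrange := IsZLattice.isCompact_range_of_periodic (Submodule.span ℤ (Set.range b))
    (QuotientAddGroup.mk : E → E ⧸ G) continuous_quotient_mk' fun z w hw => by
      rw [QuotientAddGroup.mk_add, (QuotientAddGroup.eq_zero_iff w).mpr (hG hw), add_zero]
  rw [QuotientAddGroup.mk_surjective.range_eq] at hrange
  exact isCompact_univ_iff.mp hrange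

section UnitLogLattice

variable {m' : ℕ} {nn : Fin (m' + 1) → ℕ} {v : Fin m' → Fin (m' + 1) → ℝ}

theorem linearIndependent_finCons_one (hn : ∀ i, 0 < nn i) (hv : LinearIndependent ℝ v)
    (hhyp : ∀ j, ∑ i, (nn i : ℝ) * v j i = 0) :
    LinearIndependent ℝ (Fin.cons (fun _ => 1) v : Fin (m' + 1) → Fin (m' + 1) → ℝ) := by
  let f : (Fin (m' + 1) → ℝ) →ₗ[ℝ] ℝ := ∑ i, (nn i : ℝ) • LinearMap.proj i
  have hf : ∀ x, f x = ∑ i, (nn i : ℝ) * x i := fun x => by simp [f]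
  refine hv.finCons_of_forall_map_eq_zero f ?_ fun j => by rw [hf, hhyp]
  rw [hf]
  simp only [mul_one]
  exact (Finset.sum_pos (fun i _ => Nat.cast_pos.mpr (hn i)) Finset.univ_nonempty).ne'

theorem det_of_finCons_one_mul_prod (hhyp : ∀ j, ∑ i, (nn i : ℝ) * v j i = 0) :
    (Matrix.of (Fin.cons (fun _ => 1) v : Fin (m' + 1) → Fin (m' + 1) → ℝ)).det *
        ∏ i, (nn i : ℝ) =
      (-1) ^ m' * (∑ i, (nn i : ℝ)) *
        (Matrix.of fun i j : Fin m' => (nn j.castSucc : ℝ) * v i j.castSucc).det := by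
  rw [← Matrix.det_diagonal, ← Matrix.det_mul, Matrix.det_eq_of_sum_row_succ_eq_zero]
  · congr 2
    · simp [Matrix.mul_diagonal]
    · ext i j
      simp [Matrix.mul_diagonal, mul_comm]
  · intro j
    simpa [Matrix.mul_diagonal, mul_comm] using hhyp j

end UnitLogLattice

/-- Compactness and volume of `𝔗(𝒪) = ℝ^m/(ln(𝒪^×) + d(ℝ))` (here
`m = m' + 1`): with `v j = ln(u_j) = (ln|u_j|_1, …, ln|u_j|_m)` the logarithm vectors of
generators of `𝒪^×/𝔽_𝒪^×` (linearly independent, lying in the hyperplane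
`∑ n_i t_i = 0` by the product formula), the quotient of `ℝ^m` by the subgroup `G`
generated by the `v j` and the diagonal is compact, and — identifying `ℝ^m/d(ℝ)` with
`ℝ^{m-1}` via `t ↦ (t_{i+1} − t_1)_i`, under which the quotient Lebesgue measure is the
Lebesgue measure — a fundamental domain for the resulting lattice `Γ` has volume
`vol(𝔗(𝒪)) = (n/(n_1⋯n_m))·𝓡(𝒪)`, where `n = ∑ n_i` and
`𝓡(𝒪) = |det(n_j ln|u_i|_j)_{1≤i,j≤m-1}|` is the regulator. -/
theorem statement17 (m' : ℕ) (nn : Fin (m' + 1) → ℕ) (hn : ∀ i, 0 < nn i)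
    (v : Fin m' → (Fin (m' + 1) → ℝ))
    (hv : LinearIndependent ℝ v)
    (hhyp : ∀ j, ∑ i, (nn i : ℝ) * v j i = 0)
    (G : AddSubgroup (Fin (m' + 1) → ℝ))
    (hG : G = AddSubgroup.closure
      (Set.range v ∪ Set.range (fun s : ℝ => (fun _ => s : Fin (m' + 1) → ℝ))))
    (Γ : AddSubgroup (Fin m' → ℝ))
    (hΓ : Γ = AddSubgroup.closure
      (Set.range (fun j => (fun i : Fin m' => v j i.succ - v j 0))))
    (Reg : ℝ)
    (hReg : Reg = |(Matrix.of (fun i j : Fin m' => (nn j.castSucc : ℝ) * v i j.castSucc)).det|) :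
    CompactSpace ((Fin (m' + 1) → ℝ) ⧸ G) ∧
    ∃ s : Set (Fin m' → ℝ), IsAddFundamentalDomain Γ s volume ∧
      volume s = ENNReal.ofReal
        (((∑ i, nn i : ℕ) : ℝ) / ((∏ i, nn i : ℕ) : ℝ) * Reg) := by
  subst hG hΓ hReg
  set w : Fin m' → Fin m' → ℝ := fun j i => v j i.succ - v j 0
  have hB := linearIndependent_finCons_one hn hv hhyp
  have hdet := Matrix.det_of_finCons_one v
  have hw : LinearIndependent ℝ w := by
    have hrows : LinearIndependent ℝ (Matrix.of w).row := by
      rw [Matrix.linearIndependent_rows_iff_isUnit, Matrix.isUnit_iff_isUnit_det, ← hdet,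
        ← Matrix.isUnit_iff_isUnit_det, ← Matrix.linearIndependent_rows_iff_isUnit]
      exact hB
    exact hrows
  let bB := Module.Basis.mk hB (hB.span_eq_top_of_card_eq_finrank' (by simp)).ge
  let bw := Module.Basis.mk hw (hw.span_eq_top_of_card_eq_finrank' (by simp)).ge
  refine ⟨compactSpace_quotient_of_span_int_le bB ?_, ZSpan.fundamentalDomain bw, ?_, ?_⟩
  · rw [Submodule.span_int_eq_addSubgroupClosure, AddSubgroup.closure_le, Module.Basis.coe_mk]
    rintro _ ⟨i, rfl⟩
    cases i using Fin.cases
    · exact AddSubgroup.subset_closure (Or.inr ⟨1, rfl⟩)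
    · exact AddSubgroup.subset_closure (Or.inl ⟨_, rfl⟩)
  · have hfd := ZSpan.isAddFundamentalDomain' bw volume
    rwa [Submodule.span_int_eq_addSubgroupClosure, Module.Basis.coe_mk] at hfd
  · rw [ZSpan.volume_fundamentalDomain, Module.Basis.coe_mk, ← hdet]
    congr 1
    have hP : (0 : ℝ) < ∏ i, (nn i : ℝ) := Finset.prod_pos fun i _ => Nat.cast_pos.mpr (hn i)
    push_cast
    rw [div_mul_eq_mul_div, eq_div_iff hP.ne', ← abs_of_pos hP, ← abs_mul,
      det_of_finCons_one_mul_prod hhyp, abs_mul, abs_mul, abs_of_nonneg (by positivity : (0 : ℝ) ≤ ∑ i, (nn i : ℝ))]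
    simp
end

section
/- Let $\mathcal{O}_K$ be the integral closure of $A$ in a finite extension $K/k$, $\mathfrak{C}$ a nonzero proper ideal of $\mathcal{O}_K$, and $\mathfrak{I}$ an integral ideal coprime to $\mathfrak{C}$. Let $\mathcal{O}_{K,\mathfrak{C}}^{(1)} = \{u \in \mathcal{O}_K^\times \mid u \equiv 1 \bmod \mathfrak{C}\}$. Then the map $\alpha \mapsto \alpha\mathfrak{I}$ induces a bijection from $(1 + \mathfrak{C}\mathfrak{I}^{-1})/\mathcal{O}_{K,\mathfrak{C}}^{(1)}$ onto the set of nonzero integral ideals $\mathfrak{J}$ of $\mathcal{O}_K$ with $[\mathfrak{J}] = [\mathfrak{I}]$ in the ray class group $\mathrm{Cl}(\mathcal{O}_K,\mathfrak{C})$. -/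
/-!
Write `α = 1 + λ` with `λ ∈ 𝔠𝔍⁻¹`, i.e. `λ𝔍 ⊆ 𝔠`. Then `α𝔍 ⊆ 𝔍 + 𝔠 = 𝒪` and `𝔍 ⊆ α𝔍 + 𝔠`, so
`α𝔍` is an integral ideal coprime to `𝔠`. Conversely, if `β𝔍` is integral and `β ≡ 1 (mod* 𝔠)`,
then for `x ∈ 𝔍` the integer `(β - 1)x` has `v`-adic order at least `ord_v 𝔠` at every `v ∣ 𝔠`,
hence lies in `𝔠`; so `β - 1 ∈ 𝔠𝔍⁻¹`. Finally, if `α𝔍 = β𝔍` then `β = uα` for a unit `u`, and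
`(u - 1)·α𝔍 = (β - α)𝔍 ⊆ 𝔠` together with `α𝔍 + 𝔠 = 𝒪` forces `u - 1 ∈ 𝔠`.
-/

open FractionalIdeal IsDedekindDomain
open scoped Classical

/-- `α ≡ 1 (mod* 𝔠)`: for every prime `v` dividing `𝔠`, `ord_v(α − 1) ≥ ord_v(𝔠)`. -/
noncomputable def RayCong {R : Type*} (K : Type*) [CommRing R] [IsDedekindDomain R] [Field K]
    [Algebra R K] [IsFractionRing R K] (C : Ideal R) (α : K) : Prop :=
  ∀ v : HeightOneSpectrum R, v.asIdeal ∣ C →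
    v.valuation K (α - 1) ≤
      ((Multiplicative.ofAdd
        (-(((Associates.mk v.asIdeal).count (Associates.mk C).factors : ℤ))) :
          Multiplicative ℤ) : WithZero (Multiplicative ℤ))

open scoped nonZeroDivisors
open IsDedekindDomain.HeightOneSpectrum

section RayClass

variable {R K : Type*} [CommRing R] [IsDedekindDomain R] [Field K] [Algebra R K]
  [IsFractionRing R K]

theorem Ideal.mem_iff_forall_intValuation_le {C : Ideal R} (hC : C ≠ ⊥) (r : R) :
    r ∈ C ↔ ∀ v : HeightOneSpectrum R, v.intValuation r ≤
      WithZero.exp (-((Associates.mk v.asIdeal).count (Associates.mk C).factors : ℤ)) := by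
  conv_lhs => rw [← Ideal.iInf_maxPowDividing_eq hC]
  simp only [Submodule.mem_iInf, maxPowDividing, intValuation_le_pow_iff_mem]

theorem FractionalIdeal.spanSingleton_mul_le_iff_mem_mul_inv {I J : FractionalIdeal R⁰ K}
    (hI : I ≠ 0) {x : K} : spanSingleton R⁰ x * I ≤ J ↔ x ∈ J * I⁻¹ := by
  rw [← div_eq_mul_inv, ← spanSingleton_le_iff_mem, le_div_iff_mul_le hI]

theorem FractionalIdeal.spanSingleton_add_mul_le (I : FractionalIdeal R⁰ K) (x y : K) :
    spanSingleton R⁰ (x + y) * I ≤ spanSingleton R⁰ x * I + spanSingleton R⁰ y * I := by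
  rw [← add_mul]
  refine mul_le_mul_left ?_ I
  rw [spanSingleton_le_iff_mem, ← mem_coe, coe_add]
  exact Submodule.add_mem_sup (mem_spanSingleton_self _ x) (mem_spanSingleton_self _ y)

variable {C I : Ideal R}

theorem rayCong_one_add_of_mem_mul_inv (hC : C ≠ ⊥) (hI : I ≠ ⊥) (hcop : I ⊔ C = ⊤) {x : K}
    (hx : x ∈ (C : FractionalIdeal R⁰ K) * (I : FractionalIdeal R⁰ K)⁻¹) :
    RayCong K C (1 + x) := by
  intro v hv
  rw [add_sub_cancel_left]
  have hIv : ¬ I ≤ v.asIdeal := fun hIv =>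
    v.isPrime.ne_top (top_le_iff.mp (hcop ▸ sup_le hIv (Ideal.le_of_dvd hv)))
  obtain ⟨y, hyI, hyv⟩ := SetLike.not_le_iff_exists.mp hIv
  rw [← spanSingleton_mul_le_iff_mem_mul_inv (coeIdeal_ne_zero.mpr hI)] at hx
  obtain ⟨c, hcC, hc⟩ := (mem_coeIdeal _).mp
    (hx (mul_mem_mul (mem_spanSingleton_self _ x) (mem_coeIdeal_of_mem _ hyI)))
  have hy : v.intValuation y = 1 := (intValuation_eq_one_iff_mem_primeCompl v y).mpr hyv
  calc v.valuation K x = v.valuation K (x * algebraMap R K y) := by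
        rw [map_mul, valuation_of_algebraMap, hy, mul_one]
    _ = v.intValuation c := by rw [← hc, valuation_of_algebraMap]
    _ ≤ _ := (Ideal.mem_iff_forall_intValuation_le hC c).mp hcC v

theorem sub_one_mem_mul_inv_of_rayCong (hC : C ≠ ⊥) (hI : I ≠ ⊥) {β : K}
    (hβ : spanSingleton R⁰ β * (I : FractionalIdeal R⁰ K) ≤ 1) (h : RayCong K C β) :
    β - 1 ∈ (C : FractionalIdeal R⁰ K) * (I : FractionalIdeal R⁰ K)⁻¹ := by
  rw [← spanSingleton_mul_le_iff_mem_mul_inv (coeIdeal_ne_zero.mpr hI)]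
  intro z hz
  obtain ⟨_, hx', rfl⟩ := mem_singleton_mul.mp hz
  obtain ⟨x, hx, rfl⟩ := (mem_coeIdeal _).mp hx'
  obtain ⟨b, hb⟩ := (mem_one_iff _).mp
    (hβ (mul_mem_mul (mem_spanSingleton_self _ β) (mem_coeIdeal_of_mem _ hx)))
  have hbx : (β - 1) * algebraMap R K x = algebraMap R K (b - x) := by
    rw [map_sub, hb, sub_mul, one_mul]
  rw [hbx]
  refine mem_coeIdeal_of_mem _ ((Ideal.mem_iff_forall_intValuation_le hC _).mpr fun v => ?_)
  by_cases hv : v.asIdeal ∣ C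
  · calc v.intValuation (b - x) = v.valuation K (β - 1) * v.intValuation x := by
          simpa only [map_mul, valuation_of_algebraMap] using (congrArg (v.valuation K) hbx).symm
      _ ≤ v.valuation K (β - 1) := mul_le_of_le_one_right' (v.intValuation_le_one x)
      _ ≤ _ := h v hv
  · rw [not_not.mp (mt (Associates.count_ne_zero_iff_dvd hC v.irreducible).mp hv),
      Nat.cast_zero, neg_zero, WithZero.exp_zero]
    exact v.intValuation_le_one _

theorem exists_coprime_eq_spanSingleton_one_add_mul (hC : C ≠ ⊤) (hI : I ≠ ⊥)
    (hcop : I ⊔ C = ⊤) {x : K}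
    (hx : x ∈ (C : FractionalIdeal R⁰ K) * (I : FractionalIdeal R⁰ K)⁻¹) :
    ∃ J : Ideal R, J ≠ ⊥ ∧ J ⊔ C = ⊤ ∧
      (J : FractionalIdeal R⁰ K) = spanSingleton R⁰ (1 + x) * I := by
  have hmul_le {y : K} (hy : y ∈ (C : FractionalIdeal R⁰ K) * (I : FractionalIdeal R⁰ K)⁻¹) :
      spanSingleton R⁰ y * (I : FractionalIdeal R⁰ K) ≤ C :=
    (spanSingleton_mul_le_iff_mem_mul_inv (coeIdeal_ne_zero.mpr hI)).mpr hy
  have hle_one : spanSingleton R⁰ (1 + x) * (I : FractionalIdeal R⁰ K) ≤ 1 := calc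
    spanSingleton R⁰ (1 + x) * (I : FractionalIdeal R⁰ K)
        ≤ spanSingleton R⁰ 1 * (I : FractionalIdeal R⁰ K)
          + spanSingleton R⁰ x * (I : FractionalIdeal R⁰ K) :=
          spanSingleton_add_mul_le _ _ _
    _ ≤ (I + C : FractionalIdeal R⁰ K) := by
          rw [spanSingleton_one, one_mul]
          exact add_le_add le_rfl (hmul_le hx)
    _ = 1 := by rw [← coeIdeal_sup, hcop, coeIdeal_top]
  obtain ⟨J, hJ⟩ := le_one_iff_exists_coeIdeal.mp hle_one
  have hIJ : I ≤ J ⊔ C := by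
    rw [← coeIdeal_le_coeIdeal K, coeIdeal_sup, hJ]
    have hnx : -x ∈ (C : FractionalIdeal R⁰ K) * (I : FractionalIdeal R⁰ K)⁻¹ :=
      Submodule.neg_mem (_ : Submodule R K) hx
    calc (I : FractionalIdeal R⁰ K) = spanSingleton R⁰ ((1 + x) + -x) * I := by
          rw [add_neg_cancel_right, spanSingleton_one, one_mul]
      _ ≤ spanSingleton R⁰ (1 + x) * (I : FractionalIdeal R⁰ K)
          + spanSingleton R⁰ (-x) * (I : FractionalIdeal R⁰ K) := spanSingleton_add_mul_le _ _ _
      _ ≤ spanSingleton R⁰ (1 + x) * (I : FractionalIdeal R⁰ K) + C :=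
          add_le_add le_rfl (hmul_le hnx)
  have hJC : J ⊔ C = ⊤ := top_unique (hcop ▸ sup_le hIJ le_sup_right)
  refine ⟨J, ?_, hJC, hJ⟩
  rintro rfl
  exact hC (by rwa [bot_sup_eq] at hJC)

theorem exists_unit_sub_one_mem_of_spanSingleton_mul_eq (hC : C ≠ ⊤) (hI : I ≠ ⊥)
    (hcop : I ⊔ C = ⊤) {x y : K}
    (hx : x ∈ (C : FractionalIdeal R⁰ K) * (I : FractionalIdeal R⁰ K)⁻¹)
    (hy : y ∈ (C : FractionalIdeal R⁰ K) * (I : FractionalIdeal R⁰ K)⁻¹)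
    (h : spanSingleton R⁰ (1 + x) * (I : FractionalIdeal R⁰ K)
      = spanSingleton R⁰ (1 + y) * (I : FractionalIdeal R⁰ K)) :
    ∃ u : Rˣ, (u : R) - 1 ∈ C ∧ 1 + y = algebraMap R K u * (1 + x) := by
  obtain ⟨u, hu⟩ :=
    spanSingleton_eq_spanSingleton.mp (mul_right_cancel₀ (coeIdeal_ne_zero.mpr hI) h)
  rw [Units.smul_def, Algebra.smul_def] at hu
  refine ⟨u, ?_, hu.symm⟩
  obtain ⟨J, -, hJC, hJ⟩ := exists_coprime_eq_spanSingleton_one_add_mul hC hI hcop hx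
  have hle : Ideal.span {(u : R) - 1} * J ≤ C := by
    rw [← coeIdeal_le_coeIdeal K, coeIdeal_mul, coeIdeal_span_singleton, hJ, ← mul_assoc,
      spanSingleton_mul_spanSingleton,
      spanSingleton_mul_le_iff_mem_mul_inv (coeIdeal_ne_zero.mpr hI)]
    have hyx : algebraMap R K ((u : R) - 1) * (1 + x) = y - x := by
      rw [map_sub, map_one, sub_mul, hu]
      ring
    rw [hyx]
    exact Submodule.sub_mem _ (mem_coe.mpr hy) (mem_coe.mpr hx)
  rw [← Ideal.span_singleton_le_iff_mem]
  exact sup_eq_right.mp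
    ((Ideal.mul_sup_eq_of_coprime_right hJC).symm.trans (sup_eq_right.mpr hle))

end RayClass

/-- For `𝒪_K = R` a Dedekind domain (the integral closure of `A` in `K`),
`𝔠` a nonzero proper ideal and `I` an integral ideal coprime to `𝔠`, the map `α ↦ α·I`
induces a bijection from `(1 + 𝔠I⁻¹)/𝒪^{(1)}_{K,𝔠}` onto the set of nonzero integral
ideals `J` with `[J] = [I]` in the ray class group `Cl(𝒪_K, 𝔠)` (i.e. `J` coprime to `𝔠`
and `J = (β)·I` for some `β ≡ 1 (mod* 𝔠)`): it maps into this set, it is surjective onto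
it, and its fibers are exactly the orbits of `𝒪^{(1)}_{K,𝔠} = {u ∈ 𝒪^× : u ≡ 1 mod 𝔠}`. -/
theorem statement19 {R K : Type*} [CommRing R] [IsDedekindDomain R] [Field K]
    [Algebra R K] [IsFractionRing R K]
    (C I : Ideal R) (hC0 : C ≠ ⊥) (hC1 : C ≠ ⊤) (hI0 : I ≠ ⊥) (hcop : I ⊔ C = ⊤) :
    (∀ α : K,
      (∃ lam ∈ ((C : FractionalIdeal (nonZeroDivisors R) K) *
          ((I : FractionalIdeal (nonZeroDivisors R) K))⁻¹), α = 1 + lam) →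
      ∃ J : Ideal R, J ≠ ⊥ ∧ J ⊔ C = ⊤ ∧
        (J : FractionalIdeal (nonZeroDivisors R) K)
          = spanSingleton (nonZeroDivisors R) α * (I : FractionalIdeal (nonZeroDivisors R) K) ∧
        ∃ β : K, β ≠ 0 ∧
          (J : FractionalIdeal (nonZeroDivisors R) K)
            = spanSingleton (nonZeroDivisors R) β * (I : FractionalIdeal (nonZeroDivisors R) K) ∧
          RayCong K C β) ∧
    (∀ J : Ideal R, J ≠ ⊥ → J ⊔ C = ⊤ →
      (∃ β : K, β ≠ 0 ∧
        (J : FractionalIdeal (nonZeroDivisors R) K)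
          = spanSingleton (nonZeroDivisors R) β * (I : FractionalIdeal (nonZeroDivisors R) K) ∧
        RayCong K C β) →
      ∃ α : K,
        (∃ lam ∈ ((C : FractionalIdeal (nonZeroDivisors R) K) *
            ((I : FractionalIdeal (nonZeroDivisors R) K))⁻¹), α = 1 + lam) ∧
        (J : FractionalIdeal (nonZeroDivisors R) K)
          = spanSingleton (nonZeroDivisors R) α * (I : FractionalIdeal (nonZeroDivisors R) K)) ∧
    (∀ α β : K,
      (∃ lam ∈ ((C : FractionalIdeal (nonZeroDivisors R) K) *
          ((I : FractionalIdeal (nonZeroDivisors R) K))⁻¹), α = 1 + lam) →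
      (∃ lam ∈ ((C : FractionalIdeal (nonZeroDivisors R) K) *
          ((I : FractionalIdeal (nonZeroDivisors R) K))⁻¹), β = 1 + lam) →
      (spanSingleton (nonZeroDivisors R) α * (I : FractionalIdeal (nonZeroDivisors R) K)
          = spanSingleton (nonZeroDivisors R) β * (I : FractionalIdeal (nonZeroDivisors R) K)
        ↔ ∃ u : Rˣ, ((u : R) - 1) ∈ C ∧ β = algebraMap R K u * α)) := by
  refine ⟨?_, ?_, ?_⟩
  · rintro α ⟨x, hx, rfl⟩
    obtain ⟨J, hJ0, hJC, hJ⟩ := exists_coprime_eq_spanSingleton_one_add_mul hC1 hI0 hcop hx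
    refine ⟨J, hJ0, hJC, hJ, 1 + x, fun h0 => hJ0 ?_, hJ,
      rayCong_one_add_of_mem_mul_inv hC0 hI0 hcop hx⟩
    simpa [h0] using hJ
  · rintro J - - ⟨β, -, hJ, hβ⟩
    exact ⟨β, ⟨β - 1, sub_one_mem_mul_inv_of_rayCong hC0 hI0 (hJ ▸ coeIdeal_le_one) hβ,
      (add_sub_cancel _ _).symm⟩, hJ⟩
  · rintro α β ⟨x, hx, rfl⟩ ⟨y, hy, rfl⟩
    refine ⟨exists_unit_sub_one_mem_of_spanSingleton_mul_eq hC1 hI0 hcop hx hy, ?_⟩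
    rintro ⟨u, -, hu⟩
    congr 1
    exact spanSingleton_eq_spanSingleton.mpr ⟨u, by rw [Units.smul_def, Algebra.smul_def, hu]⟩
end
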